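/- Let (X,d) be a compact metric space with a continuous ℝ^D-action T such that (X,T) is expansive in the sense that there exists δ > 0 with B_δ(x, d_{ℝ^D}) = {x} for all x ∈ X. Then the upper metric mean dimension of (X,T,d) is zero. -/

import Mathlib

open Filter Set MeasureTheory

/-- Minimal cardinality of an `ε`-spanning set of `K` w.r.t. the (pseudo)metric `ρ`. -/
noncomputable def spanNum {X : Type*} (ρ : X → X → ℝ) (K : Set X) (ε : ℝ) : ℕ :=
  sInf {n : ℕ | ∃ S : Finset X, S.card = n ∧ ∀ x ∈ K, ∃ y ∈ S, ρ x y ≤ ε}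

/-- `d_Ω(x,y) = sup_{a ∈ Ω} d(Tᵃx, Tᵃy)` for an `ℝ^D`-action `T` and `Ω ⊆ ℝ^D`. -/
noncomputable def dOmR {X : Type*} [MetricSpace X] {D : ℕ} (T : (Fin D → ℝ) → X → X)
    (Ω : Set (Fin D → ℝ)) (x y : X) : ℝ :=
  ⨆ a : Ω, dist (T a x) (T a y)

/-- The cube `[s,t]^D ⊆ ℝ^D`. -/
def cubeR (D : ℕ) (s t : ℝ) : Set (Fin D → ℝ) := {a | ∀ i, a i ∈ Set.Icc s t}

/-- Entropy of `K` at scale `ε`: `limsup_{L→∞} (1/L^D) log #(K, d_{[0,L]^D}, ε)`. -/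
noncomputable def entSR {X : Type*} [MetricSpace X] {D : ℕ} (T : (Fin D → ℝ) → X → X)
    (K : Set X) (ε : ℝ) : ℝ :=
  limsup (fun L : ℝ => Real.log (spanNum (dOmR T (cubeR D 0 L)) K ε) / L ^ D) atTop

/-- The Bowen ball `B_δ(x, d_{ℝ^D})`. -/
def bowenBallR {X : Type*} [MetricSpace X] {D : ℕ} (T : (Fin D → ℝ) → X → X)
    (δ : ℝ) (x : X) : Set X :=
  {y | dOmR T univ x y ≤ δ}

/-- Upper metric mean dimension. -/
noncomputable def mdimMUpperR {X : Type*} [MetricSpace X] {D : ℕ}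
    (T : (Fin D → ℝ) → X → X) : ℝ :=
  limsup (fun ε : ℝ => entSR T univ ε / Real.log (1 / ε)) (nhdsWithin 0 (Set.Ioi 0))

/-- Lower metric mean dimension. -/
noncomputable def mdimMLowerR {X : Type*} [MetricSpace X] {D : ℕ}
    (T : (Fin D → ℝ) → X → X) : ℝ :=
  liminf (fun ε : ℝ => entSR T univ ε / Real.log (1 / ε)) (nhdsWithin 0 (Set.Ioi 0))

/-- The closed `r`-neighborhood of `Ω ⊆ ℝ^D` in the `ℓ^∞` norm. -/
def nbhdR {D : ℕ} (r : ℝ) (Ω : Set (Fin D → ℝ)) : Set (Fin D → ℝ) :=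
  {x | ∃ y ∈ Ω, ‖x - y‖ ≤ r}

/-!
Expansiveness at scale `δ` is uniform: a compactness argument gives, for every `ε > 0`, a radius
`r` such that two orbits that stay `δ`-close for all times in `[-r, r]^D` start `ε`-close. Hence a
`δ`-spanning set for the cube `[-r, L + r]^D` is `ε`-spanning for `[0, L]^D`, and by uniform
continuity on unit cubes the former can be read off a fixed finite net sampled along the integer
grid, which has `(⌈L + 2r⌉ + 1)^D` points. So `S(X, ε)` is bounded by the logarithm of the size of
the net, uniformly in `ε`, and `S(X, ε) / log (1 / ε) → 0`.
-/

open Topology Metric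

lemma exists_finset_card_le_forall_exists_eq {α β : Type*} [Fintype β] (f : α → β) :
    ∃ S : Finset α, S.card ≤ Fintype.card β ∧ ∀ x, ∃ y ∈ S, f y = f x := by
  classical
  let σ := Function.surjInv (Set.rangeFactorization_surjective (f := f))
  refine ⟨Finset.univ.image σ, Finset.card_image_le.trans (Fintype.card_subtype_le _),
    fun x => ⟨σ ⟨f x, x, rfl⟩, Finset.mem_image_of_mem _ (Finset.mem_univ _), ?_⟩⟩
  exact congrArg Subtype.val
    (Function.surjInv_eq (f := Set.rangeFactorization f) _ ⟨f x, x, rfl⟩)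

lemma exists_finset_forall_dist_le {X : Type*} [MetricSpace X] [CompactSpace X] {η : ℝ}
    (hη : 0 < η) : ∃ S : Finset X, ∀ x, ∃ y ∈ S, dist x y ≤ η := by
  obtain ⟨t, -, ht, hcover⟩ := finite_cover_balls_of_compact (isCompact_univ (X := X)) hη
  refine ⟨ht.toFinset, fun x => ?_⟩
  obtain ⟨y, hy, hxy⟩ := mem_iUnion₂.1 (hcover (mem_univ x))
  exact ⟨y, ht.mem_toFinset.2 hy, (mem_ball.1 hxy).le⟩

lemma spanNum_le_card {X : Type*} {ρ : X → X → ℝ} {K : Set X} {ε : ℝ} (S : Finset X)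
    (hS : ∀ x ∈ K, ∃ y ∈ S, ρ x y ≤ ε) : spanNum ρ K ε ≤ S.card :=
  Nat.sInf_le ⟨S, rfl, hS⟩

lemma isCompact_cubeR (D : ℕ) (s t : ℝ) : IsCompact (cubeR D s t) := by
  have : cubeR D s t = univ.pi fun _ => Icc s t := by ext; simp only [mem_univ_pi]; rfl
  exact this ▸ isCompact_univ_pi fun _ => isCompact_Icc

section Action

variable {X : Type*} [MetricSpace X] {D : ℕ} (T : (Fin D → ℝ) → X → X)

lemma dist_le_dOmR [BoundedSpace X] {Ω : Set (Fin D → ℝ)} {a : Fin D → ℝ} (ha : a ∈ Ω)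
    (x y : X) : dist (T a x) (T a y) ≤ dOmR T Ω x y :=
  le_ciSup (f := fun a : Ω => dist (T a x) (T a y))
    ⟨diam (univ : Set X), by
      rintro _ ⟨a, rfl⟩
      exact dist_le_diam_of_mem BoundedSpace.bounded_univ (mem_univ _) (mem_univ _)⟩
    ⟨a, ha⟩

lemma dOmR_le {Ω : Set (Fin D → ℝ)} {x y : X} {c : ℝ} (hc : 0 ≤ c)
    (h : ∀ a ∈ Ω, dist (T a x) (T a y) ≤ c) : dOmR T Ω x y ≤ c :=
  Real.iSup_le (fun a => h a a.2) hc

lemma entSR_nonneg (K : Set X) (ε : ℝ) : 0 ≤ entSR T K ε := by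
  rw [entSR, limsup_eq]
  refine Real.sInf_nonneg fun b hb => ?_
  obtain ⟨L, hL, hLpos⟩ := (hb.and (eventually_gt_atTop 0)).exists
  exact (div_nonneg (Real.log_natCast_nonneg _) (pow_nonneg hLpos.le D)).trans hL

lemma exists_pos_forall_dist_le_of_isCompact [CompactSpace X]
    (hTc : Continuous fun p : (Fin D → ℝ) × X => T p.1 p.2) {K : Set (Fin D → ℝ)}
    (hK : IsCompact K) {δ : ℝ} (hδ : 0 < δ) :
    ∃ η > 0, ∀ x y : X, dist x y ≤ η → ∀ a ∈ K, dist (T a x) (T a y) ≤ δ := by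
  have huc := (hK.prod isCompact_univ).uniformContinuousOn_of_continuous hTc.continuousOn
  obtain ⟨η, hη, H⟩ := Metric.uniformContinuousOn_iff_le.1 huc δ hδ
  refine ⟨η, hη, fun x y hxy a ha => H (a, x) ⟨ha, mem_univ _⟩ (a, y) ⟨ha, mem_univ _⟩ ?_⟩
  simpa [Prod.dist_eq] using hxy

lemma exists_forall_dist_le_of_bowenBallR_eq_singleton [CompactSpace X]
    (hTc : Continuous fun p : (Fin D → ℝ) × X => T p.1 p.2) {δ : ℝ}
    (hexp : ∀ x : X, bowenBallR T δ x = {x}) {ε : ℝ} (hε : 0 < ε) :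
    ∃ r : ℕ, ∀ x y : X, (∀ a : Fin D → ℝ, ‖a‖ ≤ r → dist (T a x) (T a y) ≤ δ) →
      dist x y ≤ ε := by
  let U : ℕ → Set (X × X) := fun n =>
    ⋃ a ∈ closedBall (0 : Fin D → ℝ) n, {p | δ < dist (T a p.1) (T a p.2)}
  have hU : ∀ n, IsOpen (U n) := fun n => isOpen_biUnion fun a _ =>
    isOpen_lt continuous_const ((hTc.comp (continuous_const.prodMk continuous_fst)).dist
      (hTc.comp (continuous_const.prodMk continuous_snd)))
  have hcover : {p : X × X | ε ≤ dist p.1 p.2} ⊆ ⋃ n, U n := by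
    rintro ⟨x, y⟩ hxy
    have hy : y ∉ bowenBallR T δ x := by
      rw [hexp, mem_singleton_iff]
      rintro rfl
      simp only [mem_ofPred_eq, dist_self] at hxy
      linarith
    have hlt : δ < dOmR T univ x y := not_le.1 hy
    obtain ⟨⟨a, _⟩, ha⟩ := exists_lt_of_lt_ciSup hlt
    exact mem_iUnion.2 ⟨⌈‖a‖⌉₊, mem_iUnion₂.2 ⟨a, mem_closedBall_zero_iff.2 (Nat.le_ceil _), ha⟩⟩
  have hdir : Directed (· ⊆ ·) U := Monotone.directed_le fun m n hmn =>
    biUnion_subset_biUnion_left (closedBall_subset_closedBall (by exact_mod_cast hmn))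
  obtain ⟨r, hr⟩ := (isClosed_le continuous_const continuous_dist).isCompact.elim_directed_cover
    U hU hcover hdir
  refine ⟨r, fun x y h => le_of_not_gt fun hxy => ?_⟩
  obtain ⟨a, ha, hlt⟩ := mem_iUnion₂.1 (hr (show ε ≤ dist (x, y).1 (x, y).2 from hxy.le))
  exact (h a (mem_closedBall_zero_iff.1 ha)).not_gt hlt

variable (hTadd : ∀ (a b : Fin D → ℝ) (x : X), T (a + b) x = T a (T b x))
include hTadd

lemma dOmR_cubeR_le_of_forall_grid {η δ : ℝ} (hδ : 0 ≤ δ)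
    (hA : ∀ x y : X, dist x y ≤ η → ∀ a ∈ cubeR D 0 1, dist (T a x) (T a y) ≤ δ)
    {s t : ℝ} {x y : X}
    (h : ∀ v : Fin D → Fin (⌈t - s⌉₊ + 1),
      dist (T (fun i => s + v i) x) (T (fun i => s + v i) y) ≤ η) :
    dOmR T (cubeR D s t) x y ≤ δ := by
  refine dOmR_le T hδ fun a ha => ?_
  let v : Fin D → Fin (⌈t - s⌉₊ + 1) := fun i => ⟨⌊a i - s⌋₊, Nat.lt_succ_of_le
    ((Nat.floor_le_floor (by linarith [(ha i).2])).trans (Nat.floor_le_ceil _))⟩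
  have hfrac : a - (fun i => s + v i) ∈ cubeR D 0 1 := fun i => by
    have h1 := Nat.floor_le (sub_nonneg.2 (ha i).1)
    have h2 := Nat.lt_floor_add_one (a i - s)
    simp only [Pi.sub_apply, v, mem_Icc]
    constructor <;> linarith
  simpa only [← hTadd, sub_add_cancel] using hA _ _ (h v) _ hfrac

lemma exists_finset_forall_dOmR_cubeR_le {η δ : ℝ} (hδ : 0 ≤ δ)
    (hA : ∀ x y : X, dist x y ≤ η → ∀ a ∈ cubeR D 0 1, dist (T a x) (T a y) ≤ δ)
    {S₀ : Finset X} (hS₀ : ∀ x : X, ∃ y ∈ S₀, dist x y ≤ η / 2) (s t : ℝ) :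
    ∃ S : Finset X, S.card ≤ S₀.card ^ ((⌈t - s⌉₊ + 1) ^ D) ∧
      ∀ x, ∃ y ∈ S, dOmR T (cubeR D s t) x y ≤ δ := by
  choose g hgS hgd using hS₀
  obtain ⟨S, hcard, hS⟩ := exists_finset_card_le_forall_exists_eq
    fun x (v : Fin D → Fin (⌈t - s⌉₊ + 1)) => (⟨g (T (fun i => s + v i) x), hgS _⟩ : S₀)
  refine ⟨S, by simpa [Fintype.card_fun] using hcard, fun x => ?_⟩
  obtain ⟨y, hyS, hxy⟩ := hS x
  refine ⟨y, hyS, dOmR_cubeR_le_of_forall_grid T hTadd hδ hA fun v => ?_⟩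
  set p : Fin D → ℝ := fun i => s + v i
  have hg : g (T p y) = g (T p x) := congrArg Subtype.val (congrFun hxy v)
  calc dist (T p x) (T p y) ≤ dist (T p x) (g (T p x)) + dist (g (T p y)) (T p y) := by
        rw [hg]; exact dist_triangle _ _ _
    _ ≤ η / 2 + η / 2 := add_le_add (hgd _) (dist_comm (T p y) _ ▸ hgd _)
    _ = η := add_halves η

lemma dOmR_cubeR_le_of_forall_dist_le [BoundedSpace X] {r δ ε : ℝ} (hε : 0 ≤ ε)
    (hB : ∀ x y : X, (∀ a : Fin D → ℝ, ‖a‖ ≤ r → dist (T a x) (T a y) ≤ δ) → dist x y ≤ ε)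
    {L : ℝ} {x y : X} (h : dOmR T (cubeR D (-r) (L + r)) x y ≤ δ) :
    dOmR T (cubeR D 0 L) x y ≤ ε := by
  refine dOmR_le T hε fun b hb => hB _ _ fun a ha => ?_
  rw [← hTadd, ← hTadd]
  refine (dist_le_dOmR T (fun i => ?_) x y).trans h
  have hai := abs_le.1 ((Real.norm_eq_abs _).symm.trans_le ((norm_le_pi_norm a i).trans ha))
  simp only [Pi.add_apply, mem_Icc]
  constructor <;> linarith [(hb i).1, (hb i).2]

lemma spanNum_le_of_forall_dist_le [BoundedSpace X] {η δ ε r : ℝ} (hδ : 0 ≤ δ) (hε : 0 ≤ ε)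
    (hA : ∀ x y : X, dist x y ≤ η → ∀ a ∈ cubeR D 0 1, dist (T a x) (T a y) ≤ δ)
    {S₀ : Finset X} (hS₀ : ∀ x : X, ∃ y ∈ S₀, dist x y ≤ η / 2)
    (hB : ∀ x y : X, (∀ a : Fin D → ℝ, ‖a‖ ≤ r → dist (T a x) (T a y) ≤ δ) → dist x y ≤ ε)
    (L : ℝ) :
    spanNum (dOmR T (cubeR D 0 L)) univ ε ≤ S₀.card ^ ((⌈L + 2 * r⌉₊ + 1) ^ D) := by
  obtain ⟨S, hcard, hS⟩ := exists_finset_forall_dOmR_cubeR_le T hTadd hδ hA hS₀ (-r) (L + r)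
  refine (spanNum_le_card S fun x _ => ?_).trans ?_
  · obtain ⟨y, hyS, hxy⟩ := hS x
    exact ⟨y, hyS, dOmR_cubeR_le_of_forall_dist_le T hTadd hε hB hxy⟩
  · rwa [show L + r - -r = L + 2 * r by ring] at hcard

end Action

lemma tendsto_add_pow_mul_div_pow (D : ℕ) (c A : ℝ) :
    Tendsto (fun L : ℝ => (L + c) ^ D * A / L ^ D) atTop (𝓝 A) := by
  have h1 : Tendsto (fun L : ℝ => 1 + c / L) atTop (𝓝 1) := by
    simpa using (tendsto_const_nhds (x := (1 : ℝ))).add (tendsto_const_nhds.div_atTop tendsto_id)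
  refine ((h1.pow D).mul_const A).congr' ?_ |>.trans (by simp)
  filter_upwards [eventually_gt_atTop (0 : ℝ)] with L hL
  rw [one_add_div hL.ne', div_pow, div_mul_eq_mul_div, add_comm L]

lemma limsup_log_div_pow_le {D N : ℕ} {c : ℝ} {n : ℝ → ℕ}
    (h : ∀ L, n L ≤ N ^ ((⌈L + c⌉₊ + 1) ^ D)) :
    limsup (fun L => Real.log (n L) / L ^ D) atTop ≤ Real.log N := by
  have hg := tendsto_add_pow_mul_div_pow D (c + 2) (Real.log N)
  have hle : ∀ᶠ L in atTop, Real.log (n L) / L ^ D ≤ (L + (c + 2)) ^ D * Real.log N / L ^ D := by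
    filter_upwards [eventually_gt_atTop 0, eventually_ge_atTop (-c)] with L hL hLc
    gcongr
    have hceil : ((⌈L + c⌉₊ + 1 : ℕ) : ℝ) ≤ L + (c + 2) := by
      push_cast; linarith [Nat.ceil_lt_add_one (show 0 ≤ L + c by linarith)]
    calc Real.log (n L) ≤ Real.log ((N ^ ((⌈L + c⌉₊ + 1) ^ D) : ℕ) : ℝ) := by
          rcases (n L).eq_zero_or_pos with h0 | hpos
          · rw [h0, Nat.cast_zero, Real.log_zero]; exact Real.log_natCast_nonneg _
          · exact Real.log_le_log (by exact_mod_cast hpos) (by exact_mod_cast h L)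
      _ = ((⌈L + c⌉₊ + 1 : ℕ) : ℝ) ^ D * Real.log N := by push_cast [Real.log_pow]; ring
      _ ≤ (L + (c + 2)) ^ D * Real.log N := by gcongr
  have hcob : IsCoboundedUnder (· ≤ ·) atTop fun L => Real.log (n L) / L ^ D :=
    isCoboundedUnder_le_of_eventually_le atTop (eventually_gt_atTop 0 |>.mono fun L hL =>
      div_nonneg (Real.log_natCast_nonneg _) (pow_nonneg hL.le D))
  exact (limsup_le_limsup hle hcob hg.isBoundedUnder_le).trans_eq hg.limsup_eq

lemma tendsto_div_log_one_div_of_abs_le {f : ℝ → ℝ} {B : ℝ} (hf : ∀ ε > 0, |f ε| ≤ B) :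
    Tendsto (fun ε => f ε / Real.log (1 / ε)) (𝓝[>] 0) (𝓝 0) := by
  have hlog : Tendsto (fun ε : ℝ => Real.log (1 / ε)) (𝓝[>] 0) atTop :=
    (Real.tendsto_log_atTop.comp tendsto_inv_nhdsGT_zero).congr fun ε => by simp
  have hbdd : IsBoundedUnder (· ≤ ·) (𝓝[>] 0) ((‖·‖) ∘ f) :=
    ⟨B, eventually_map.2 (eventually_mem_nhdsWithin.mono fun ε hε => hf ε hε)⟩
  exact ((tendsto_inv_atTop_zero.comp hlog).zero_mul_isBoundedUnder_le hbdd).congr fun ε =>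
    (div_eq_inv_mul _ _).symm

theorem stmt16_general {X : Type*} [MetricSpace X] [CompactSpace X] {D : ℕ}
    (T : (Fin D → ℝ) → X → X)
    (hTc : Continuous fun p : (Fin D → ℝ) × X => T p.1 p.2)
    (hTadd : ∀ (a b : Fin D → ℝ) (x : X), T (a + b) x = T a (T b x))
    (h : ∃ δ : ℝ, 0 < δ ∧ ∀ x : X, bowenBallR T δ x = {x}) :
    mdimMUpperR T = 0 := by
  obtain ⟨δ, hδ, hexp⟩ := h
  obtain ⟨η, hη, hA⟩ := exists_pos_forall_dist_le_of_isCompact T hTc (isCompact_cubeR D 0 1) hδ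
  obtain ⟨S₀, hS₀⟩ := exists_finset_forall_dist_le (X := X) (half_pos hη)
  have hent : ∀ ε > 0, |entSR T univ ε| ≤ Real.log S₀.card := fun ε hε => by
    obtain ⟨r, hr⟩ := exists_forall_dist_le_of_bowenBallR_eq_singleton T hTc hexp hε
    rw [abs_of_nonneg (entSR_nonneg T univ ε)]
    exact limsup_log_div_pow_le
      (spanNum_le_of_forall_dist_le T hTadd hδ.le hε.le hA hS₀ hr)
  exact (tendsto_div_log_one_div_of_abs_le hent).limsup_eq

/-- An expansive ℝ^D-action has zero upper metric mean dimension. -/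
theorem stmt16 {X : Type*} [MetricSpace X] [CompactSpace X] {D : ℕ}
    (T : (Fin D → ℝ) → X → X)
    (hTc : Continuous fun p : (Fin D → ℝ) × X => T p.1 p.2)
    (hT0 : ∀ x : X, T 0 x = x)
    (hTadd : ∀ (a b : Fin D → ℝ) (x : X), T (a + b) x = T a (T b x))
    (h : ∃ δ : ℝ, 0 < δ ∧ ∀ x : X, bowenBallR T δ x = {x}) :
    mdimMUpperR T = 0 :=
  stmt16_general T hTc hTadd h
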